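/- If C is the unique maximally-consistent base with C ⊇ B (i.e., C is maximally-consistent, C ⊇ B, and every maximally-consistent base D with D ⊇ B equals C), then for every classical formula φ, ⊩_B φ if and only if ⊩_C φ. -/

import Mathlib

/-- A base rule: a pair of a finite set of premiss atoms and a conclusion atom. -/
structure BaseRule (At : Type) where
  prem : Finset At
  concl : At

/-- A base is a set of base rules. -/
abbrev Base (At : Type) := Set (BaseRule At)

/-- The closure of a base `B`: the least set of atoms closed under the rules of `B`. -/
inductive Closure {At : Type} (B : Base At) : At → Prop
  | step (r : BaseRule At) (hr : r ∈ B) (ih : ∀ q ∈ r.prem, Closure B q) :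
      Closure B r.concl

/-- Classical formulas: atoms, falsum and implication. -/
inductive CForm (At : Type) where
  | atom : At → CForm At
  | bot  : CForm At
  | imp  : CForm At → CForm At → CForm At

/-- Base-extension validity of a classical formula at a base. -/
def CValid {At : Type} : Base At → CForm At → Prop
  | B, .atom p  => Closure B p
  | B, .bot     => ∀ p : At, Closure B p
  | B, .imp φ ψ => ∀ C : Base At, B ⊆ C → CValid C φ → CValid C ψ

/-- Base-extension consequence: `Γ ⊩_B φ`. -/
def CCon {At : Type} (Γ : Set (CForm At)) (B : Base At) (φ : CForm At) : Prop :=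
  ∀ C : Base At, B ⊆ C → (∀ ψ ∈ Γ, CValid C ψ) → CValid C φ

/-- A base is inconsistent iff `⊥` is valid at it. -/
def CInconsistent {At : Type} (B : Base At) : Prop := CValid B CForm.bot

/-- A base is consistent iff it is not inconsistent. -/
def CConsistent {At : Type} (B : Base At) : Prop := ¬ CInconsistent B

/-- A base is maximally-consistent iff it is consistent and adding any missing
base rule makes it inconsistent. -/
def CMaxCon {At : Type} (B : Base At) : Prop :=
  CConsistent B ∧ ∀ δ : BaseRule At, δ ∈ B ∨ CInconsistent (insert δ B)


/-!
Every consistent base `D ⊇ B` sits inside the base `closedBase S` of all rules that keep its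
closure `S` closed, and that base is maximally consistent. By uniqueness it is `C`, so every
consistent extension of `B` lies below `C` and has the same atoms as `C`. Induction on `φ` then
shows that consistent extensions of `B` validate exactly what `C` validates: for an implication,
an extension of `D` is either inconsistent, and validates everything, or again a consistent
extension of `B`. If `B` itself is inconsistent, so is `C ⊇ B`, and both validate everything.
-/

section

variable {At : Type}

theorem Closure.mono {B C : Base At} (h : B ⊆ C) {p : At} (hp : Closure B p) : Closure C p := by
  induction hp with
  | step r hr _ ih => exact .step r (h hr) ih

theorem CValid.mono : ∀ (φ : CForm At) {B C : Base At}, B ⊆ C → CValid B φ → CValid C φ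
  | .atom _, _, _, h, hB => Closure.mono h hB
  | .bot, _, _, h, hB => fun p => Closure.mono h (hB p)
  | .imp _ _, _, _, h, hB => fun D hD hφ => hB D (h.trans hD) hφ

theorem CInconsistent.mono {B C : Base At} (h : B ⊆ C) (hB : CInconsistent B) :
    CInconsistent C :=
  CValid.mono .bot h hB

theorem CInconsistent.cValid : ∀ (φ : CForm At) {B : Base At}, CInconsistent B → CValid B φ
  | .atom p, _, h => h p
  | .bot, _, h => h
  | .imp _ ψ, _, h => fun _ hD _ => CInconsistent.cValid ψ (h.mono hD)

section ClosedBase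

def closedBase (S : Set At) : Base At :=
  {r | r.concl ∈ S ∨ ∃ q ∈ r.prem, q ∉ S}

variable {S : Set At}

theorem closure_closedBase_iff {p : At} : Closure (closedBase S) p ↔ p ∈ S := by
  refine ⟨fun hp => ?_, fun hp => .step ⟨∅, p⟩ (Or.inl hp) (by simp)⟩
  induction hp with
  | step r hr _ ih =>
    rcases hr with hr | ⟨q, hq, hqS⟩
    · exact hr
    · exact absurd (ih q hq) hqS

theorem subset_closedBase_closure (D : Base At) : D ⊆ closedBase {p | Closure D p} := by
  intro r hr
  by_cases hprem : ∀ q ∈ r.prem, Closure D q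
  · exact Or.inl (Closure.step r hr hprem)
  · push Not at hprem
    exact Or.inr hprem

/-- A rule `δ` outside `closedBase S` has its premisses in `S` and its conclusion outside `S`;
adding it derives `δ.concl`, from which the rules `{δ.concl} ⇒ q` already in `closedBase S`
derive every atom. -/
theorem cMaxCon_closedBase {a : At} (ha : a ∉ S) : CMaxCon (closedBase S) := by
  refine ⟨fun h => ha (closure_closedBase_iff.mp (h a)), fun δ => ?_⟩
  by_cases hδ : δ ∈ closedBase S
  · exact Or.inl hδ
  right
  simp only [closedBase, Set.mem_ofPred_eq, not_or, not_exists, not_and, not_not] at hδ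
  obtain ⟨hconcl, hprem⟩ := hδ
  have hsub : closedBase S ⊆ insert δ (closedBase S) := Set.subset_insert _ _
  have hδconcl : Closure (insert δ (closedBase S)) δ.concl :=
    .step δ (Set.mem_insert _ _) fun q hq => (closure_closedBase_iff.mpr (hprem q hq)).mono hsub
  intro q
  by_cases hq : q ∈ S
  · exact (closure_closedBase_iff.mpr hq).mono hsub
  · refine .step ⟨{δ.concl}, q⟩ (Or.inr (Or.inr ⟨δ.concl, by simp, hconcl⟩)) ?_
    simpa using hδconcl

end ClosedBase

section UniqueMaxCon

variable {B C : Base At} (huniq : ∀ D : Base At, CMaxCon D → B ⊆ D → D = C)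
include huniq

theorem closedBase_closure_eq_of_unique {D : Base At} (hBD : B ⊆ D) (hD : CConsistent D) :
    closedBase {p | Closure D p} = C := by
  obtain ⟨a, ha⟩ : ∃ a, ¬ Closure D a := not_forall.mp hD
  exact huniq _ (cMaxCon_closedBase (S := {p | Closure D p}) ha)
    (hBD.trans (subset_closedBase_closure D))

theorem subset_of_unique {D : Base At} (hBD : B ⊆ D) (hD : CConsistent D) : D ⊆ C :=
  closedBase_closure_eq_of_unique huniq hBD hD ▸ subset_closedBase_closure D

theorem closure_iff_of_unique {D : Base At} (hBD : B ⊆ D) (hD : CConsistent D) (p : At) :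
    Closure D p ↔ Closure C p := by
  rw [← closedBase_closure_eq_of_unique huniq hBD hD, closure_closedBase_iff]
  rfl

theorem cValid_iff_of_unique (φ : CForm At) :
    ∀ D : Base At, B ⊆ D → CConsistent D → (CValid D φ ↔ CValid C φ) := by
  induction φ with
  | atom p => exact fun D hBD hD => closure_iff_of_unique huniq hBD hD p
  | bot => exact fun D hBD hD => forall_congr' (closure_iff_of_unique huniq hBD hD)
  | imp φ ψ ihφ ihψ =>
    intro D hBD hD
    refine ⟨CValid.mono _ (subset_of_unique huniq hBD hD), fun hC E hDE hφ => ?_⟩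
    by_cases hE : CConsistent E
    · have hBE : B ⊆ E := hBD.trans hDE
      exact (ihψ E hBE hE).mpr (hC C le_rfl ((ihφ E hBE hE).mp hφ))
    · exact CInconsistent.cValid ψ (not_not.mp hE)

end UniqueMaxCon

end

theorem classical_unique_maxcon_general {At : Type}
    (B C : Base At) (hBC : B ⊆ C)
    (huniq : ∀ D : Base At, CMaxCon D → B ⊆ D → D = C) :
    ∀ φ : CForm At, CValid B φ ↔ CValid C φ := by
  intro φ
  by_cases hB : CConsistent B
  · exact cValid_iff_of_unique huniq φ B le_rfl hB
  · have hB : CInconsistent B := not_not.mp hB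
    exact ⟨fun _ => CInconsistent.cValid φ (hB.mono hBC), fun _ => CInconsistent.cValid φ hB⟩

/-- a base with a unique maximally-consistent superset agrees with it. -/
theorem classical_unique_maxcon {At : Type} [Countable At] [Infinite At]
    (B C : Base At) (hC : CMaxCon C) (hBC : B ⊆ C)
    (huniq : ∀ D : Base At, CMaxCon D → B ⊆ D → D = C) :
    ∀ φ : CForm At, CValid B φ ↔ CValid C φ :=
  classical_unique_maxcon_general B C hBC huniq
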